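/- Let λ ∈ (0,1) and θ ∈ (0,1/2). Then the function f : ℝ → ℝ defined by f(c) = (c/((2θ−1+2cθ)(2−2θ−c(2θ−1))))^((1−θ)/(θ−1/2)) − (2θ−1+2cθ)²/(1−λ) has exactly one zero in the open interval ((1−θ)/θ, ∞); i.e., there exists a unique c ∈ ((1−θ)/θ, ∞) with f(c) = 0. -/

import Mathlib

/-!
Taking logarithms and multiplying by `θ - 1/2`, the equation `f c = 0` becomes
`θ log A + (1 - θ) log (B / c) = (θ - 1/2) log (1 - λ)`, where `A = 2θ - 1 + 2cθ` and
`B = 2 - 2θ - c(2θ - 1)`. The left side vanishes at `c = (1 - θ)/θ` (there `A = 1`, `B = c`),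
its derivative `2(1 - 2θ)(θc - (1 - θ))² / (ABc)` is positive beyond that point, and it tends
to `∞`, while the right side is positive; the intermediate value theorem and strict
monotonicity give exactly one solution.
-/

open Real Set Filter Topology

theorem existsUnique_mem_Ioi_eq_of_strictMonoOn {H : ℝ → ℝ} {a y : ℝ}
    (hcont : ContinuousOn H (Ici a)) (hmono : StrictMonoOn H (Ici a))
    (htop : Tendsto H atTop atTop) (hy : H a < y) :
    ∃! c, c ∈ Ioi a ∧ H c = y := by
  obtain ⟨b, hyb, hab⟩ := ((htop.eventually_gt_atTop y).and (eventually_gt_atTop a)).exists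
  obtain ⟨c, hc, hHc⟩ :=
    intermediate_value_Ioo hab.le (hcont.mono Icc_subset_Ici_self) ⟨hy, hyb⟩
  refine ⟨c, ⟨hc.1, hHc⟩, fun d ⟨hd, hHd⟩ => ?_⟩
  exact hmono.injOn (mem_Ici_of_Ioi hd) (mem_Ici_of_Ioi hc.1) (hHd.trans hHc.symm)

noncomputable def growthF (θ lam c : ℝ) : ℝ :=
  (c / ((2*θ - 1 + 2*c*θ) * (2 - 2*θ - c*(2*θ - 1)))) ^ ((1 - θ)/(θ - 1/2))
    - (2*θ - 1 + 2*c*θ)^2 / (1 - lam)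

noncomputable def logBalance (θ c : ℝ) : ℝ :=
  θ * log (2*θ - 1 + 2*c*θ) + (1 - θ) * (log (2 - 2*θ - c*(2*θ - 1)) - log c)

theorem growthF_eq_zero_iff {θ lam c : ℝ} (hθ : θ ≠ 1/2) (hlam : lam < 1) (hc : 0 < c)
    (hA : 0 < 2*θ - 1 + 2*c*θ) (hB : 0 < 2 - 2*θ - c*(2*θ - 1)) :
    growthF θ lam c = 0 ↔ logBalance θ c = (θ - 1/2) * log (1 - lam) := by
  have hθ' : θ - 1/2 ≠ 0 := sub_ne_zero.mpr hθ
  have hlam' : 0 < 1 - lam := sub_pos.mpr hlam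
  rw [growthF, sub_eq_zero, rpow_def_of_pos (div_pos hc (mul_pos hA hB)),
    ← exp_log (div_pos (pow_pos hA 2) hlam'), exp_eq_exp, log_div hc.ne' (mul_pos hA hB).ne',
    log_mul hA.ne' hB.ne', log_div (pow_pos hA 2).ne' hlam'.ne', log_pow, logBalance,
    ← mul_left_inj' hθ', mul_assoc, div_mul_cancel₀ _ hθ']
  constructor <;> intro h
  · linear_combination -h
  · linear_combination -h

theorem logBalance_args_pos {θ c : ℝ} (hθ₀ : 0 < θ) (hθ : θ ≤ 1/2) (hc : (1 - θ)/θ ≤ c) :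
    0 < c ∧ 0 < 2*θ - 1 + 2*c*θ ∧ 0 < 2 - 2*θ - c*(2*θ - 1) := by
  have hc₀ : 0 < c := (div_pos (by linarith) hθ₀).trans_le hc
  rw [div_le_iff₀ hθ₀] at hc
  exact ⟨hc₀, by linarith, by nlinarith⟩

theorem hasDerivAt_logBalance {θ c : ℝ} (hc : 0 < c) (hA : 0 < 2*θ - 1 + 2*c*θ)
    (hB : 0 < 2 - 2*θ - c*(2*θ - 1)) :
    HasDerivAt (logBalance θ)
      (2 * (1 - 2*θ) * (θ*c - (1 - θ))^2 / ((2*θ - 1 + 2*c*θ) * (2 - 2*θ - c*(2*θ - 1)) * c)) c := by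
  have hA' : HasDerivAt (fun c => 2*θ - 1 + 2*c*θ) (2*θ) c := by
    simpa using (((hasDerivAt_id c).const_mul 2).mul_const θ).const_add (2*θ - 1)
  have hB' : HasDerivAt (fun c => 2 - 2*θ - c*(2*θ - 1)) (-(2*θ - 1)) c := by
    simpa using ((hasDerivAt_id c).mul_const (2*θ - 1)).const_sub (2 - 2*θ)
  refine (((hA'.log hA.ne').const_mul θ).add
    (((hB'.log hB.ne').sub (hasDerivAt_log hc.ne')).const_mul (1 - θ))).congr_deriv ?_
  generalize hAe : 2*θ - 1 + 2*c*θ = A at hA ⊢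
  generalize hBe : 2 - 2*θ - c*(2*θ - 1) = B at hB ⊢
  field_simp
  rw [← hAe, ← hBe]
  ring

theorem logBalance_one_sub_div_self {θ : ℝ} (hθ : θ ≠ 0) : logBalance θ ((1 - θ)/θ) = 0 := by
  have hA : 2*θ - 1 + 2*((1 - θ)/θ)*θ = 1 := by field_simp; ring
  have hB : 2 - 2*θ - (1 - θ)/θ*(2*θ - 1) = (1 - θ)/θ := by field_simp; ring
  simp [logBalance, hA, hB]

theorem continuousOn_logBalance {θ : ℝ} (hθ₀ : 0 < θ) (hθ : θ ≤ 1/2) :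
    ContinuousOn (logBalance θ) (Ici ((1 - θ)/θ)) := by
  intro c hc
  obtain ⟨hc₀, hA, hB⟩ := logBalance_args_pos hθ₀ hθ hc
  exact (hasDerivAt_logBalance hc₀ hA hB).continuousAt.continuousWithinAt

theorem strictMonoOn_logBalance {θ : ℝ} (hθ₀ : 0 < θ) (hθ : θ < 1/2) :
    StrictMonoOn (logBalance θ) (Ici ((1 - θ)/θ)) := by
  refine strictMonoOn_of_deriv_pos (convex_Ici _) (continuousOn_logBalance hθ₀ hθ.le) ?_
  intro c hc
  rw [interior_Ici, mem_Ioi] at hc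
  obtain ⟨hc₀, hA, hB⟩ := logBalance_args_pos hθ₀ hθ.le hc.le
  rw [(hasDerivAt_logBalance hc₀ hA hB).deriv]
  rw [div_lt_iff₀ hθ₀] at hc
  have hgap : 0 < θ*c - (1 - θ) := by linarith
  exact div_pos (mul_pos (by linarith) (pow_pos hgap 2)) (by positivity)

theorem tendsto_logBalance_atTop {θ : ℝ} (hθ₀ : 0 < θ) (hθ : θ < 1/2) :
    Tendsto (logBalance θ) atTop atTop := by
  have hA : Tendsto (fun c => θ * log (2*θ - 1 + 2*c*θ)) atTop atTop := by
    refine (tendsto_log_atTop.comp (tendsto_atTop_add_const_left _ _ ?_)).const_mul_atTop hθ₀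
    exact (tendsto_id.const_mul_atTop two_pos).atTop_mul_const hθ₀
  have hBc : Tendsto (fun c => (1 - θ) * (log (2 - 2*θ - c*(2*θ - 1)) - log c)) atTop
      (𝓝 ((1 - θ) * log (1 - 2*θ))) := by
    have hratio : Tendsto (fun c => (2 - 2*θ)/c + (1 - 2*θ)) atTop (𝓝 (1 - 2*θ)) := by
      simpa using (tendsto_const_nhds.div_atTop tendsto_id).add (tendsto_const_nhds (x := 1 - 2*θ))
    refine (((continuousAt_log (by linarith)).tendsto.comp hratio).const_mul (1 - θ)).congr' ?_
    filter_upwards [eventually_gt_atTop 0] with c hc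
    have hB : 0 < 2 - 2*θ - c*(2*θ - 1) := by nlinarith
    rw [Function.comp_apply, ← log_div hB.ne' hc.ne']
    congr 2
    field_simp
    ring
  exact hA.atTop_add hBc

theorem growth_optimal_f_unique_root_theta_lt_half
    (lam θ : ℝ) (hlam : lam ∈ Set.Ioo (0:ℝ) 1) (hθ : θ ∈ Set.Ioo (0:ℝ) (1/2))
    (f : ℝ → ℝ)
    (hf : ∀ c : ℝ, f c =
      (c / ((2*θ - 1 + 2*c*θ) * (2 - 2*θ - c*(2*θ - 1)))) ^ ((1 - θ)/(θ - 1/2))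
        - (2*θ - 1 + 2*c*θ)^2 / (1 - lam)) :
    ∃! c : ℝ, c ∈ Set.Ioi ((1 - θ)/θ) ∧ f c = 0 := by
  obtain ⟨hθ₀, hθ⟩ := hθ
  obtain rfl : f = growthF θ lam := funext hf
  have htarget : 0 < (θ - 1/2) * log (1 - lam) :=
    mul_pos_of_neg_of_neg (by linarith) (log_neg (by linarith [hlam.2]) (by linarith [hlam.1]))
  have hroot := existsUnique_mem_Ioi_eq_of_strictMonoOn (continuousOn_logBalance hθ₀ hθ.le)
    (strictMonoOn_logBalance hθ₀ hθ) (tendsto_logBalance_atTop hθ₀ hθ)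
    (by rwa [logBalance_one_sub_div_self hθ₀.ne'])
  refine (existsUnique_congr fun c => and_congr_right fun hc => ?_).mpr hroot
  obtain ⟨hc₀, hA, hB⟩ := logBalance_args_pos hθ₀ hθ.le (le_of_lt hc)
  exact growthF_eq_zero_iff hθ.ne hlam.2 hc₀ hA hB
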